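/- Let η be a unary query on Σ* recognized by a morphism μ : Σ* → M to a finite monoid M, and let x, y, z ∈ Σ* with y nonempty and e = μ(y) satisfying e^{|M|} = e^{|M|+1}. Let N = 2|M| + 1, and let c be the number of positions lying in the middle ((|M|+1)-st) copy of y in the word x y^N z that satisfy η. Then for all n, m ≥ N, #η(x yⁿ z) − #η(x yᵐ z) = (n − m)·c. In particular, if no position of the middle copy of y in x y^N z satisfies η, then #η(x yⁿ z) is constant for all n ≥ N. -/

import Mathlib

def IsMonoidMorphism {A M : Type} [Monoid M] (μ : List A → M) : Prop :=
  μ [] = 1 ∧ ∀ u v : List A, μ (u ++ v) = μ u * μ v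

/-- A morphism `μ` recognizes a unary query `η` when membership of a position `i` in
`η w` depends only on the triple `(μ (w[1..i-1]), w[i], μ (w[i+1..|w|]))`. -/
def RecognizesUnary {A M : Type} (μ : List A → M)
    (η : (w : List A) → Set (Fin w.length)) : Prop :=
  ∀ (w w' : List A) (i : Fin w.length) (i' : Fin w'.length),
    μ (w.take i) = μ (w'.take i') → w.get i = w'.get i' →
    μ (w.drop (i + 1)) = μ (w'.drop (i' + 1)) →
    (i ∈ η w ↔ i' ∈ η w')


/-!
Write `e = μ y`; `e ^ |M| = e ^ (|M| + 1)` forces `e ^ n = e ^ |M|` for all `n ≥ |M|`. For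
`n ≥ N` split `x yⁿ⁺¹ z = u · y · t` with `u = x y^|M|` and `t = y^(n-|M|) z`; then
`μ (u y) = μ u` and `μ (y t) = μ t`. Deleting the middle `y` therefore changes neither the
letter nor the μ-images of the left and right contexts of any other position, so
`#η (x yⁿ⁺¹ z) = #η (x yⁿ z) +` (η-positions in that copy of `y`). That block count does not
depend on `n`, since it only sees `μ t = e ^ |M| μ z`, so it equals `c`.
-/

open Finset

lemma pow_eq_pow_of_pow_eq_pow_succ {M : Type} [Monoid M] {e : M} {K n : ℕ}
    (he : e ^ K = e ^ (K + 1)) (hn : K ≤ n) : e ^ n = e ^ K := by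
  induction n, hn using Nat.le_induction with
  | base => rfl
  | succ n _ ih => rw [pow_succ, ih, ← pow_succ, ← he]

namespace IsMonoidMorphism

variable {A M : Type} [Monoid M] {μ : List A → M}

lemma map_flatten (hμ : IsMonoidMorphism μ) (L : List (List A)) :
    μ L.flatten = (L.map μ).prod := by
  induction L with
  | nil => exact hμ.1
  | cons u L ih => rw [List.flatten_cons, hμ.2, ih, List.map_cons, List.prod_cons]

lemma map_flatten_replicate (hμ : IsMonoidMorphism μ) (n : ℕ) (y : List A) :
    μ (List.replicate n y).flatten = μ y ^ n := by
  rw [hμ.map_flatten, List.map_replicate, List.prod_replicate]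

end IsMonoidMorphism

section Positions

open scoped Classical

variable {A M : Type} (η : (w : List A) → Set (Fin w.length))

def queryPositions (w : List A) : Set ℕ := Fin.val '' η w

noncomputable def countIn (w : List A) (a b : ℕ) : ℕ := #{p ∈ Ico a b | p ∈ queryPositions η w}

variable {η}

lemma mem_queryPositions {w : List A} {p : ℕ} :
    p ∈ queryPositions η w ↔ ∃ h : p < w.length, ⟨p, h⟩ ∈ η w := by
  simp [queryPositions, Fin.exists_iff]

lemma countIn_eq_ncard (w : List A) (a b : ℕ) :
    countIn η w a b = {j : Fin w.length | j ∈ η w ∧ a ≤ (j : ℕ) ∧ (j : ℕ) < b}.ncard := by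
  rw [countIn, ← Set.ncard_coe_finset, ← Set.ncard_image_of_injective _ Fin.val_injective]
  congr 1
  ext p
  simp only [coe_filter, mem_Ico, mem_queryPositions, Set.mem_ofPred_eq, Set.mem_image,
    Fin.exists_iff]
  aesop

lemma ncard_eq_countIn (w : List A) : (η w).ncard = countIn η w 0 w.length := by
  rw [countIn_eq_ncard]
  congr 1
  ext j
  simp

lemma countIn_add_countIn (w : List A) {a b c : ℕ} (hab : a ≤ b) (hbc : b ≤ c) :
    countIn η w a b + countIn η w b c = countIn η w a c := by
  simp only [countIn, card_filter]
  exact sum_Ico_consecutive _ hab hbc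

variable {μ : List A → M}

lemma RecognizesUnary.mem_queryPositions_iff (hη : RecognizesUnary μ η) {w w' : List A}
    {p p' : ℕ} (hp : p < w.length) (hp' : p' < w'.length)
    (hpre : μ (w.take p) = μ (w'.take p')) (hletter : w[p] = w'[p'])
    (hsuf : μ (w.drop (p + 1)) = μ (w'.drop (p' + 1))) :
    p ∈ queryPositions η w ↔ p' ∈ queryPositions η w' := by
  simpa [mem_queryPositions, hp, hp'] using hη w w' ⟨p, hp⟩ ⟨p', hp'⟩ hpre hletter hsuf

variable [Monoid M]

lemma mem_queryPositions_append_right_iff (hμ : IsMonoidMorphism μ) (hη : RecognizesUnary μ η)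
    {s w w' : List A} (hw : μ w = μ w') {p : ℕ} (hp : p < s.length) :
    p ∈ queryPositions η (s ++ w) ↔ p ∈ queryPositions η (s ++ w') := by
  apply hη.mem_queryPositions_iff (by simp; omega) (by simp; omega)
  · rw [List.take_append_of_le_length hp.le, List.take_append_of_le_length hp.le]
  · rw [List.getElem_append_left hp, List.getElem_append_left hp]
  · rw [List.drop_append_of_le_length hp, List.drop_append_of_le_length hp, hμ.2, hμ.2, hw]

lemma mem_queryPositions_append_left_iff (hμ : IsMonoidMorphism μ) (hη : RecognizesUnary μ η)
    {u u' s : List A} (hu : μ u = μ u') (q : ℕ) :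
    u.length + q ∈ queryPositions η (u ++ s) ↔ u'.length + q ∈ queryPositions η (u' ++ s) := by
  by_cases hq : q < s.length
  · apply hη.mem_queryPositions_iff (by simpa) (by simpa)
    · rw [List.take_length_add_append, List.take_length_add_append, hμ.2, hμ.2, hu]
    · simp
    · rw [add_assoc, add_assoc, List.drop_length_add_append, List.drop_length_add_append]
  · simp [mem_queryPositions, hq]

lemma countIn_append_right_congr (hμ : IsMonoidMorphism μ) (hη : RecognizesUnary μ η)
    {s w w' : List A} (hw : μ w = μ w') {a b : ℕ} (hb : b ≤ s.length) :
    countIn η (s ++ w) a b = countIn η (s ++ w') a b := by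
  refine congrArg card (filter_congr fun p hp => ?_)
  exact mem_queryPositions_append_right_iff hμ hη hw (by rw [mem_Ico] at hp; omega)

lemma countIn_append_left_congr (hμ : IsMonoidMorphism μ) (hη : RecognizesUnary μ η)
    {u u' s : List A} (hu : μ u = μ u') (a b : ℕ) :
    countIn η (u ++ s) (u.length + a) (u.length + b) =
      countIn η (u' ++ s) (u'.length + a) (u'.length + b) := by
  simp only [countIn, card_filter, add_comm _ a, add_comm _ b, ← sum_Ico_add]
  exact sum_congr rfl fun q _ => by rw [mem_queryPositions_append_left_iff hμ hη hu q]

end Positions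

section Pumping

variable {A M : Type} [Monoid M] {μ : List A → M} {η : (w : List A) → Set (Fin w.length)}

theorem ncard_append_append (hμ : IsMonoidMorphism μ) (hη : RecognizesUnary μ η)
    {u v w : List A} (hu : μ u * μ v = μ u) (hw : μ v * μ w = μ w) :
    (η (u ++ v ++ w)).ncard =
      (η (u ++ w)).ncard + countIn η (u ++ v ++ w) u.length (u.length + v.length) := by
  have hprefix : countIn η (u ++ v ++ w) 0 u.length = countIn η (u ++ w) 0 u.length := by
    rw [List.append_assoc]
    exact countIn_append_right_congr hμ hη (by rw [hμ.2, hw]) le_rfl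
  have hsuffix : countIn η (u ++ v ++ w) (u.length + v.length) (u.length + v.length + w.length) =
      countIn η (u ++ w) u.length (u.length + w.length) := by
    simpa using countIn_append_left_congr hμ hη (s := w) ((hμ.2 u v).trans hu) 0 w.length
  have hsplit_uvw := countIn_add_countIn (η := η) (u ++ v ++ w) (Nat.zero_le u.length)
    (Nat.le_add_right u.length v.length)
  have hsplit_uvw' := countIn_add_countIn (η := η) (u ++ v ++ w) (Nat.zero_le (u.length + v.length))
    (Nat.le_add_right (u.length + v.length) w.length)
  have hsplit_uw := countIn_add_countIn (η := η) (u ++ w) (Nat.zero_le u.length)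
    (Nat.le_add_right u.length w.length)
  simp only [ncard_eq_countIn, List.length_append]
  omega

theorem ncard_pumped_succ (hμ : IsMonoidMorphism μ) (hη : RecognizesUnary μ η)
    (x y z : List A) {K n : ℕ} (he : μ y ^ K = μ y ^ (K + 1)) (hn : 2 * K + 1 ≤ n) :
    (η (x ++ (List.replicate (n + 1) y).flatten ++ z)).ncard =
      (η (x ++ (List.replicate n y).flatten ++ z)).ncard +
        countIn η (x ++ (List.replicate (2 * K + 1) y).flatten ++ z)
          (x.length + K * y.length) (x.length + (K + 1) * y.length) := by
  obtain ⟨j, rfl⟩ : ∃ j, n = K + j := ⟨n - K, by omega⟩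
  set u := x ++ (List.replicate K y).flatten
  set tail := fun i => (List.replicate i y).flatten ++ z
  have hword : ∀ i, x ++ (List.replicate (K + i) y).flatten ++ z = u ++ tail i := fun i => by
    simp only [u, tail, List.replicate_add, List.flatten_append, List.append_assoc]
  have hword_succ :
      ∀ i, x ++ (List.replicate (K + (i + 1)) y).flatten ++ z = u ++ y ++ tail i := fun i => by
    rw [hword]
    simp only [tail, List.replicate_succ, List.flatten_cons, List.append_assoc]
  have htail : ∀ i, K ≤ i → μ (tail i) = μ y ^ K * μ z := fun i hi => by
    rw [hμ.2, hμ.map_flatten_replicate, pow_eq_pow_of_pow_eq_pow_succ he hi]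
  have hu : μ u * μ y = μ u := by
    rw [hμ.2, hμ.map_flatten_replicate, mul_assoc, ← pow_succ, ← he]
  have hyt : μ y * μ (tail j) = μ (tail j) :=
    calc μ y * μ (tail j) = μ (tail (j + 1)) := by
          simp only [tail, List.replicate_succ, List.flatten_cons, List.append_assoc, hμ.2]
      _ = μ (tail j) := by rw [htail _ (by omega), htail _ (by omega)]
  have hulen : u.length = x.length + K * y.length := by simp [u]
  rw [show 2 * K + 1 = K + (K + 1) by omega, show K + j + 1 = K + (j + 1) by omega, hword_succ,
    hword_succ, hword, ncard_append_append hμ hη hu hyt,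
    countIn_append_right_congr hμ hη (htail j (by omega) |>.trans (htail K le_rfl).symm)
      (by simp), hulen]
  ring_nf

end Pumping

theorem stmt8_general {A M : Type} [Monoid M] [Fintype M]
    (μ : List A → M) (hμ : IsMonoidMorphism μ)
    (η : (w : List A) → Set (Fin w.length)) (hη : RecognizesUnary μ η)
    (x y z : List A)
    (he : μ y ^ (Fintype.card M) = μ y ^ (Fintype.card M + 1))
    (N : ℕ) (hN : N = 2 * Fintype.card M + 1)
    -- `W n` is the word `x yⁿ z`
    (W : ℕ → List A) (hW : ∀ n, W n = x ++ (List.replicate n y).flatten ++ z)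
    -- `c` is the number of positions of `x y^N z` lying in the middle
    -- (`(|M|+1)`-st) copy of `y` that satisfy `η`
    (c : ℕ)
    (hc : c = Set.ncard {j : Fin (W N).length | j ∈ η (W N) ∧
      x.length + Fintype.card M * y.length ≤ (j : ℕ) ∧
      (j : ℕ) < x.length + (Fintype.card M + 1) * y.length}) :
    (∀ n m : ℕ, N ≤ n → N ≤ m →
      ((η (W n)).ncard : ℤ) - ((η (W m)).ncard : ℤ) = ((n : ℤ) - (m : ℤ)) * c) ∧
    (c = 0 → ∀ n, N ≤ n → (η (W n)).ncard = (η (W N)).ncard) := by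
  have hstep : ∀ n, N ≤ n → (η (W (n + 1))).ncard = (η (W n)).ncard + c := fun n hn => by
    rw [hc, ← countIn_eq_ncard, hW, hW, hW, hN]
    exact ncard_pumped_succ hμ hη x y z he (hN ▸ hn)
  have hlinear : ∀ n, N ≤ n → (η (W n)).ncard = (η (W N)).ncard + (n - N) * c := by
    intro n hn
    induction n, hn using Nat.le_induction with
    | base => simp
    | succ n hn ih => rw [hstep n hn, ih, Nat.sub_add_comm hn, add_one_mul, add_assoc]
  refine ⟨fun n m hn hm => ?_, fun hc0 n hn => by simp [hlinear n hn, hc0]⟩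
  rw [hlinear n hn, hlinear m hm]
  push_cast [Nat.cast_sub hn, Nat.cast_sub hm]
  ring

theorem stmt8 {A M : Type} [Monoid M] [Fintype M]
    (μ : List A → M) (hμ : IsMonoidMorphism μ)
    (η : (w : List A) → Set (Fin w.length)) (hη : RecognizesUnary μ η)
    (x y z : List A) (hy : y ≠ [])
    (he : μ y ^ (Fintype.card M) = μ y ^ (Fintype.card M + 1))
    (N : ℕ) (hN : N = 2 * Fintype.card M + 1)
    -- `W n` is the word `x yⁿ z`
    (W : ℕ → List A) (hW : ∀ n, W n = x ++ (List.replicate n y).flatten ++ z)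
    -- `c` is the number of positions of `x y^N z` lying in the middle
    -- (`(|M|+1)`-st) copy of `y` that satisfy `η`
    (c : ℕ)
    (hc : c = Set.ncard {j : Fin (W N).length | j ∈ η (W N) ∧
      x.length + Fintype.card M * y.length ≤ (j : ℕ) ∧
      (j : ℕ) < x.length + (Fintype.card M + 1) * y.length}) :
    (∀ n m : ℕ, N ≤ n → N ≤ m →
      ((η (W n)).ncard : ℤ) - ((η (W m)).ncard : ℤ) = ((n : ℤ) - (m : ℤ)) * c) ∧
    (c = 0 → ∀ n, N ≤ n → (η (W n)).ncard = (η (W N)).ncard) :=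
  stmt8_general μ hμ η hη x y z he N hN W hW c hc
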